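/- Let k be a σ-field, A a nonzero k-σ-algebra, n ≥ 1, and d ≥ 1. Suppose χ is an invertible n × n matrix over A ⊗[k] A satisfying the cocycle condition ∂₂(χ) = ∂₁(χ) · ∂₃(χ) (the homomorphisms ∂ᵢ applied entrywise) and τ^d(χ) = 1 (the identity matrix; τ^d applied entrywise). Then there exist an invertible n × n matrix α over A and an invertible n × n matrix a over k such that χ = δ₁(α) · δ₂(α)⁻¹ and σ_A^d(α) = algebraMap k A applied entrywise to a. (This is the cocycle-level content of the result that for G = {g ∈ GLₙ | σ^d(g) = 1}, every G-torsor is isomorphic to one of the form Y = {x ∈ GLₙ | σ^d(x) = a} with a ∈ GLₙ(k).) -/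

import Mathlib

/-!
Faithfully flat descent along `k → A`. Let `V ⊆ Aⁿ` be the `k`-space of vectors `v` with
`δ₁ v = χ · δ₂ v`. For `y ∈ Aⁿ` the vector `x = χ⁻¹ · δ₁(μ(χ) y) ∈ (A ⊗ A)ⁿ` satisfies, by the
cocycle identity, the same condition for the base change of `χ` to the second factor, so its
coefficients in a `k`-basis of that factor lie in `V`; multiplying out gives `y = μ x`, hence `V`
spans `Aⁿ` over `A`. Conversely, on that level `δ₁(μ x) = χ x`, which makes `k`-independent
vectors of `V` independent over `A`. A `k`-basis of `V` is therefore the set of columns of some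
`α ∈ GLₙ(A)` with `δ₁ α = χ · δ₂ α`. Applying `τᵈ` and using `τᵈ χ = 1` gives
`δ₁(σᵈ α) = δ₂(σᵈ α)`, and the equalizer of `δ₁, δ₂` is `k` since `A` is faithfully flat over `k`.
-/

open TensorProduct Matrix

/-- `δ₁ : A → A ⊗[k] A`, `a ↦ 1 ⊗ a`. -/
noncomputable def amitsurD1 (k A : Type*) [CommRing k] [CommRing A] [Algebra k A] :
    A →ₐ[k] A ⊗[k] A :=
  Algebra.TensorProduct.includeRight

/-- `δ₂ : A → A ⊗[k] A`, `a ↦ a ⊗ 1`. -/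
noncomputable def amitsurD2 (k A : Type*) [CommRing k] [CommRing A] [Algebra k A] :
    A →ₐ[k] A ⊗[k] A :=
  Algebra.TensorProduct.includeLeft

/-- `∂₁ : A ⊗[k] A → A ⊗[k] A ⊗[k] A`, `a ⊗ b ↦ 1 ⊗ a ⊗ b`. -/
noncomputable def amitsurP1 (k A : Type*) [CommRing k] [CommRing A] [Algebra k A] :
    A ⊗[k] A →ₐ[k] A ⊗[k] (A ⊗[k] A) :=
  Algebra.TensorProduct.includeRight

/-- `∂₂ : A ⊗[k] A → A ⊗[k] A ⊗[k] A`, `a ⊗ b ↦ a ⊗ 1 ⊗ b`. -/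
noncomputable def amitsurP2 (k A : Type*) [CommRing k] [CommRing A] [Algebra k A] :
    A ⊗[k] A →ₐ[k] A ⊗[k] (A ⊗[k] A) :=
  Algebra.TensorProduct.map (AlgHom.id k A) Algebra.TensorProduct.includeRight

/-- `∂₃ : A ⊗[k] A → A ⊗[k] A ⊗[k] A`, `a ⊗ b ↦ a ⊗ b ⊗ 1`. -/
noncomputable def amitsurP3 (k A : Type*) [CommRing k] [CommRing A] [Algebra k A] :
    A ⊗[k] A →ₐ[k] A ⊗[k] (A ⊗[k] A) :=
  Algebra.TensorProduct.map (AlgHom.id k A) Algebra.TensorProduct.includeLeft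

section Tensor

variable {k A : Type*} [CommRing k] [CommRing A] [Algebra k A]

@[simp] lemma amitsurD1_apply (a : A) : amitsurD1 k A a = 1 ⊗ₜ a := rfl
@[simp] lemma amitsurD2_apply (a : A) : amitsurD2 k A a = a ⊗ₜ 1 := rfl
@[simp] lemma amitsurP1_tmul (a b : A) : amitsurP1 k A (a ⊗ₜ b) = 1 ⊗ₜ (a ⊗ₜ b) := rfl

@[simp] lemma amitsurP2_tmul (a b : A) : amitsurP2 k A (a ⊗ₜ b) = a ⊗ₜ ((1 : A) ⊗ₜ b) := by
  simp [amitsurP2]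

@[simp] lemma amitsurP3_tmul (a b : A) : amitsurP3 k A (a ⊗ₜ b) = a ⊗ₜ (b ⊗ₜ (1 : A)) := by
  simp [amitsurP3]

variable (k A) in
noncomputable def mulLastTwo : A ⊗[k] (A ⊗[k] A) →ₐ[k] A ⊗[k] A :=
  Algebra.TensorProduct.map (AlgHom.id k A) (Algebra.TensorProduct.lmul' k)

lemma mulLastTwo_comp_amitsurP1 :
    (mulLastTwo k A).comp (amitsurP1 k A) =
      (amitsurD1 k A).comp (Algebra.TensorProduct.lmul' k) :=
  Algebra.TensorProduct.ext' fun a b => by simp [mulLastTwo]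

lemma mulLastTwo_comp_amitsurP2 : (mulLastTwo k A).comp (amitsurP2 k A) = AlgHom.id k _ :=
  Algebra.TensorProduct.ext' fun a b => by simp [mulLastTwo]

lemma mulLastTwo_comp_amitsurP3 : (mulLastTwo k A).comp (amitsurP3 k A) = AlgHom.id k _ :=
  Algebra.TensorProduct.ext' fun a b => by simp [mulLastTwo]

noncomputable def contractSecond (f : A →ₗ[k] k) : A ⊗[k] A →ₗ[k] A :=
  TensorProduct.rid k A ∘ₗ f.lTensor A

@[simp] lemma contractSecond_tmul (f : A →ₗ[k] k) (a b : A) :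
    contractSecond f (a ⊗ₜ b) = f b • a := by
  simp [contractSecond]

lemma contractSecond_lTensor_amitsurP1 (f : A →ₗ[k] k) (z : A ⊗[k] A) :
    (contractSecond f).lTensor A (amitsurP1 k A z) = amitsurD1 k A (contractSecond f z) := by
  induction z with
  | zero => simp
  | tmul a b => simp [TensorProduct.tmul_smul]
  | add x y hx hy => simp only [map_add, hx, hy]

lemma contractSecond_lTensor_amitsurP2 (f : A →ₗ[k] k) (z : A ⊗[k] A) :
    (contractSecond f).lTensor A (amitsurP2 k A z) = amitsurD2 k A (contractSecond f z) := by
  induction z with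
  | zero => simp
  | tmul a b => simp
  | add x y hx hy => simp only [map_add, hx, hy]

lemma contractSecond_mul_tmul_one (f : A →ₗ[k] k) (a : A) (w : A ⊗[k] A) :
    contractSecond f ((a ⊗ₜ (1 : A)) * w) = a * contractSecond f w := by
  induction w with
  | zero => simp
  | tmul b c => simp
  | add x y hx hy => simp [mul_add, hx, hy]

lemma contractSecond_lTensor_amitsurP3_mul (f : A →ₗ[k] k) (r : A ⊗[k] A)
    (y : A ⊗[k] (A ⊗[k] A)) :
    (contractSecond f).lTensor A (amitsurP3 k A r * y) = r * (contractSecond f).lTensor A y := by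
  induction r with
  | zero => simp
  | add x y hx hy => simp only [map_add, add_mul, hx, hy]
  | tmul a b =>
    induction y with
    | zero => simp
    | add x y hx hy => simp only [mul_add, map_add, hx, hy]
    | tmul c w =>
      simp only [amitsurP3_tmul, Algebra.TensorProduct.tmul_mul_tmul, LinearMap.lTensor_tmul,
        contractSecond_mul_tmul_one]

end Tensor

lemma comp_mulVec {ι R S F : Type*} [Fintype ι] [NonAssocSemiring R] [NonAssocSemiring S]
    [FunLike F R S] [RingHomClass F R S] (f : F) (M : Matrix ι ι R) (v : ι → R) :
    f ∘ (M *ᵥ v) = M.map f *ᵥ (f ∘ v) :=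
  funext ((f : R →+* S).map_mulVec M v)

lemma units_inv_map {ι R S F : Type*} [Fintype ι] [DecidableEq ι] [CommRing R] [CommRing S]
    [FunLike F R S] [RingHomClass F R S] (f : F) (χ : (Matrix ι ι R)ˣ) :
    (χ⁻¹).val.map f = (Units.map (f : R →+* S).mapMatrix.toMonoidHom χ)⁻¹.val := by
  rw [← map_inv]
  rfl

section Descent

variable {k A ι : Type*} [CommRing k] [CommRing A] [Algebra k A] [Fintype ι]

def IsAmitsurCocycle (χ : Matrix ι ι (A ⊗[k] A)) : Prop :=
  χ.map (amitsurP2 k A) = χ.map (amitsurP1 k A) * χ.map (amitsurP3 k A)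

noncomputable def descentSpace (χ : Matrix ι ι (A ⊗[k] A)) : Submodule k (ι → A) :=
  LinearMap.eqLocus ((amitsurD1 k A).toLinearMap.compLeft ι)
    ((χ.mulVecLin.restrictScalars k) ∘ₗ (amitsurD2 k A).toLinearMap.compLeft ι)

/-- The descent space of the base change of `χ` along the second factor `A → A ⊗[k] A`:
under `(A ⊗ A) ⊗_A (A ⊗ A) ≅ A ⊗ A ⊗ A` the maps `δ₁, δ₂` become `∂₁, ∂₂` and `χ` becomes `∂₃ χ`. -/
noncomputable def descentSpace₂ (χ : Matrix ι ι (A ⊗[k] A)) : Submodule k (ι → A ⊗[k] A) :=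
  LinearMap.eqLocus ((amitsurP1 k A).toLinearMap.compLeft ι)
    (((χ.map (amitsurP3 k A)).mulVecLin.restrictScalars k) ∘ₗ
      (amitsurP2 k A).toLinearMap.compLeft ι)

lemma mem_descentSpace {χ : Matrix ι ι (A ⊗[k] A)} {v : ι → A} :
    v ∈ descentSpace χ ↔ amitsurD1 k A ∘ v = χ *ᵥ (amitsurD2 k A ∘ v) :=
  Iff.rfl

lemma mem_descentSpace₂ {χ : Matrix ι ι (A ⊗[k] A)} {x : ι → A ⊗[k] A} :
    x ∈ descentSpace₂ χ ↔ amitsurP1 k A ∘ x = χ.map (amitsurP3 k A) *ᵥ (amitsurP2 k A ∘ x) :=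
  Iff.rfl


variable {χ : Matrix ι ι (A ⊗[k] A)}

lemma tmul_mem_descentSpace₂ {v : ι → A} (hv : v ∈ descentSpace χ) (a : A) :
    (fun i => v i ⊗ₜ[k] a) ∈ descentSpace₂ χ := by
  rw [mem_descentSpace₂]
  funext i
  have hvi : 1 ⊗ₜ v i = ∑ j, χ i j * (v j ⊗ₜ 1) := congrFun hv i
  have hP1 : amitsurP1 k A (v i ⊗ₜ a) = amitsurP3 k A (1 ⊗ₜ v i) * (1 ⊗ₜ (1 ⊗ₜ a)) := by
    simp
  simp only [Function.comp_apply, hP1, hvi, map_sum, Finset.sum_mul, Matrix.mulVec, dotProduct,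
    Matrix.map_apply, map_mul, mul_assoc]
  simp

lemma amitsurD1_comp_lmul'_of_mem_descentSpace₂ {x : ι → A ⊗[k] A}
    (hx : x ∈ descentSpace₂ χ) :
    amitsurD1 k A ∘ (Algebra.TensorProduct.lmul' k ∘ x) = χ *ᵥ x := by
  have h := congrArg (mulLastTwo k A ∘ ·) (mem_descentSpace₂.mp hx)
  simp only [comp_mulVec, Matrix.map_map, ← Function.comp_assoc, ← AlgHom.coe_comp,
    mulLastTwo_comp_amitsurP1, mulLastTwo_comp_amitsurP2, mulLastTwo_comp_amitsurP3] at h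
  exact h

lemma contractSecond_comp_mem_descentSpace {x : ι → A ⊗[k] A} (hx : x ∈ descentSpace₂ χ)
    (f : A →ₗ[k] k) : contractSecond f ∘ x ∈ descentSpace χ := by
  rw [mem_descentSpace]
  funext i
  have h := congrArg ((contractSecond f).lTensor A) (congrFun (mem_descentSpace₂.mp hx) i)
  simpa only [Matrix.mulVec, dotProduct, Function.comp_apply, Matrix.map_apply, map_sum,
    contractSecond_lTensor_amitsurP3_mul, contractSecond_lTensor_amitsurP1,
    contractSecond_lTensor_amitsurP2] using h

lemma inv_mulVec_amitsurD1_mem_descentSpace₂ [DecidableEq ι] {χ : (Matrix ι ι (A ⊗[k] A))ˣ}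
    (hχ : IsAmitsurCocycle χ.val) (y : ι → A) :
    (χ⁻¹).val *ᵥ (amitsurD1 k A ∘ y) ∈ descentSpace₂ χ.val := by
  let χ' (f : A ⊗[k] A →ₐ[k] A ⊗[k] (A ⊗[k] A)) :=
    Units.map (f : A ⊗[k] A →+* A ⊗[k] (A ⊗[k] A)).mapMatrix.toMonoidHom χ
  have hcoc : χ' (amitsurP2 k A) = χ' (amitsurP1 k A) * χ' (amitsurP3 k A) := Units.ext hχ
  have hinv : (χ' (amitsurP1 k A))⁻¹ = χ' (amitsurP3 k A) * (χ' (amitsurP2 k A))⁻¹ := by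
    rw [hcoc]
    group
  have hP12 : amitsurP1 k A ∘ amitsurD1 k A ∘ y = amitsurP2 k A ∘ amitsurD1 k A ∘ y := by
    funext i
    simp
  rw [mem_descentSpace₂, comp_mulVec, comp_mulVec, units_inv_map, units_inv_map]
  rw [hP12]
  change ((χ' (amitsurP1 k A))⁻¹).val *ᵥ _ = _
  rw [hinv, Units.val_mul, ← Matrix.mulVec_mulVec]
  rfl

end Descent

lemma LinearIndependent.eq_zero_of_finsuppSum_tmul_eq_zero {R M N L : Type*} [CommRing R]
    [AddCommGroup M] [Module R M] [AddCommGroup N] [Module R N] [Module.Flat R N]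
    {v : L → M} (hv : LinearIndependent R v) {g : L →₀ N}
    (h : (g.sum fun l n => v l ⊗ₜ[R] n) = 0) : g = 0 := by
  classical
  have hsum (g : L →₀ N) :
      (Finsupp.linearCombination R v).rTensor N ((TensorProduct.finsuppScalarLeft R N L).symm g) =
        g.sum fun l n => v l ⊗ₜ[R] n := by
    induction g using Finsupp.induction_linear with
    | zero => simp
    | add f g hf hg =>
      rw [map_add, map_add, hf, hg,
        Finsupp.sum_add_index' (by simp) fun _ _ _ => TensorProduct.tmul_add _ _ _]
    | single l n => simp
  rw [← hsum, ← map_zero ((Finsupp.linearCombination R v).rTensor N)] at h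
  simpa using Module.Flat.rTensor_preserves_injective_linearMap _ hv h

lemma Module.Basis.exists_units_col_mem_range {A L ι : Type*} [CommRing A] [Nontrivial A]
    [Fintype ι] [DecidableEq ι] (b : Module.Basis L A (ι → A)) :
    ∃ α : (Matrix ι ι A)ˣ, ∀ j, (fun i => α.val i j) ∈ Set.range b := by
  let e := b.indexEquiv (Pi.basisFun A ι)
  let := (Pi.basisFun A ι).invertibleToMatrix (b.reindex e)
  refine ⟨unitOfInvertible ((Pi.basisFun A ι).toMatrix (b.reindex e)), fun j => ⟨e.symm j, ?_⟩⟩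
  funext i
  simp [Module.Basis.toMatrix_apply]

section Field

variable {k A ι : Type*} [Field k] [CommRing A] [Algebra k A] [Fintype ι]

lemma lmul'_comp_mem_span_descentSpace {χ : Matrix ι ι (A ⊗[k] A)} {x : ι → A ⊗[k] A}
    (hx : x ∈ descentSpace₂ χ) :
    Algebra.TensorProduct.lmul' k ∘ x ∈ Submodule.span A (descentSpace χ : Set (ι → A)) := by
  classical
  let e := Module.Basis.ofVectorSpace k A
  let F := TensorProduct.equivFinsuppOfBasisRight (M := A) e
  let s := Finset.univ.biUnion fun i => (F (x i)).support
  have hcoeff (b) : (fun i => F (x i) b) ∈ descentSpace χ := by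
    convert contractSecond_comp_mem_descentSpace hx (e.coord b) using 1
    exact funext fun i => TensorProduct.equivFinsuppOfBasisRight_apply e (x i) b
  have hsub (i) : (F (x i)).support ⊆ s :=
    Finset.subset_biUnion_of_mem (fun i => (F (x i)).support) (Finset.mem_univ i)
  have hsum : Algebra.TensorProduct.lmul' k ∘ x = ∑ b ∈ s, e b • fun i => F (x i) b := by
    funext i
    conv_lhs => rw [Function.comp_apply, ← F.symm_apply_apply (x i)]
    rw [TensorProduct.equivFinsuppOfBasisRight_symm_apply,
      Finsupp.sum_of_support_subset _ (hsub i) _ (by simp)]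
    simp [map_sum, Finset.sum_apply, mul_comm]
  rw [hsum]
  exact Submodule.sum_mem _ fun b _ => Submodule.smul_mem _ _ (Submodule.subset_span (hcoeff b))

variable [DecidableEq ι] {χ : (Matrix ι ι (A ⊗[k] A))ˣ}

lemma span_descentSpace_eq_top (hχ : IsAmitsurCocycle χ.val) :
    Submodule.span A (descentSpace χ.val : Set (ι → A)) = ⊤ := by
  refine Submodule.eq_top_iff'.mpr fun y => ?_
  let μ : A ⊗[k] A →ₐ[k] A := Algebra.TensorProduct.lmul' k
  set U := Units.map (μ : A ⊗[k] A →+* A).mapMatrix.toMonoidHom χ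
  have hy : μ ∘ ((χ⁻¹).val *ᵥ (amitsurD1 k A ∘ (U.val *ᵥ y))) = y := by
    have hμ : μ ∘ amitsurD1 k A ∘ (U.val *ᵥ y) = U.val *ᵥ y := by
      funext i
      simp [μ]
    rw [comp_mulVec, hμ, units_inv_map, Matrix.mulVec_mulVec, Units.inv_mul, Matrix.one_mulVec]
  exact hy ▸ lmul'_comp_mem_span_descentSpace (inv_mulVec_amitsurD1_mem_descentSpace₂ hχ _)

lemma linearIndependent_of_mem_descentSpace {L : Type*} {v : L → ι → A}
    (hv : ∀ l, v l ∈ descentSpace χ.val) (hli : LinearIndependent k v) :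
    LinearIndependent A v := by
  rw [linearIndependent_iff]
  intro g hg
  let x : ι → A ⊗[k] A := g.sum fun l a i => v l i ⊗ₜ a
  have hx : x ∈ descentSpace₂ χ.val :=
    Submodule.finsuppSum_mem _ _ _ _ fun l _ => tmul_mem_descentSpace₂ (hv l) (g l)
  have hμx : Algebra.TensorProduct.lmul' k ∘ x = 0 := by
    rw [← hg]
    funext i
    simp [x, Finsupp.linearCombination_apply, Finsupp.sum_apply', map_finsuppSum, mul_comm]
  have hχx : χ.val *ᵥ x = 0 := by
    rw [← amitsurD1_comp_lmul'_of_mem_descentSpace₂ hx, hμx]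
    funext i
    simp
  have hx0 : x = 0 := by
    simpa [Matrix.mulVec_mulVec] using congrArg ((χ⁻¹).val *ᵥ ·) hχx
  refine hli.eq_zero_of_finsuppSum_tmul_eq_zero
    ((TensorProduct.piLeft k A fun _ : ι => A).injective ?_)
  rw [map_zero, ← hx0]
  funext i
  simp [x, map_finsuppSum, Finsupp.sum_apply']

lemma exists_units_map_amitsurD1_eq_mul [Nontrivial A]
    (hχ : IsAmitsurCocycle χ.val) :
    ∃ α : (Matrix ι ι A)ˣ, α.val.map (amitsurD1 k A) = χ.val * α.val.map (amitsurD2 k A) := by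
  obtain ⟨S, hSV, hspanS, hliS⟩ :=
    exists_linearIndependent k (descentSpace χ.val : Set (ι → A))
  have hspan : Submodule.span A (Set.range ((↑) : S → ι → A)) = ⊤ := by
    rw [Subtype.range_coe, ← Submodule.span_span_of_tower k, hspanS, Submodule.span_span_of_tower,
      span_descentSpace_eq_top hχ]
  obtain ⟨α, hα⟩ := (Module.Basis.mk (linearIndependent_of_mem_descentSpace
    (fun l => hSV l.2) hliS) hspan.ge).exists_units_col_mem_range
  refine ⟨α, Matrix.ext fun i j => ?_⟩
  obtain ⟨l, hl⟩ := hα j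
  have hcol := congrFun (mem_descentSpace.mp (hSV l.2)) i
  rw [Module.Basis.mk_apply] at hl
  rw [hl] at hcol
  simpa [Matrix.mul_apply, Matrix.mulVec, dotProduct] using hcol

end Field

lemma pow_apply_tmul {k A : Type*} [CommRing k] [CommRing A] [Algebra k A] {σ : A →+* A}
    {τ : A ⊗[k] A →+* A ⊗[k] A} (hτ : ∀ a b : A, τ (a ⊗ₜ b) = σ a ⊗ₜ σ b) (m : ℕ) (a b : A) :
    (τ ^ m) (a ⊗ₜ b) = (σ ^ m) a ⊗ₜ (σ ^ m) b := by
  induction m generalizing a b with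
  | zero => rfl
  | succ m ih => simp only [pow_succ, RingHom.coe_mul, Function.comp_apply, hτ, ih]

section Equalizer

variable {k A ι : Type*} [CommRing k] [CommRing A] [Algebra k A] [Fintype ι] [DecidableEq ι]

lemma map_amitsurD1_eq_map_amitsurD2_of_tmul {σ : A →+* A} {τ : A ⊗[k] A →+* A ⊗[k] A}
    (hτ : ∀ a b : A, τ (a ⊗ₜ b) = σ a ⊗ₜ σ b) {α : Matrix ι ι A} {χ : Matrix ι ι (A ⊗[k] A)}
    (hα : α.map (amitsurD1 k A) = χ * α.map (amitsurD2 k A)) (hχ : χ.map τ = 1) :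
    (α.map σ).map (amitsurD1 k A) = (α.map σ).map (amitsurD2 k A) :=
  calc (α.map σ).map (amitsurD1 k A) = (α.map (amitsurD1 k A)).map τ := by ext; simp [hτ]
    _ = χ.map τ * (α.map (amitsurD2 k A)).map τ := by rw [hα, Matrix.map_mul]
    _ = (α.map σ).map (amitsurD2 k A) := by rw [hχ, one_mul]; ext; simp [hτ]

lemma exists_units_eq_map_algebraMap {k : Type*} [Field k] [Algebra k A] [Nontrivial A]
    (β : (Matrix ι ι A)ˣ)
    (hβ : β.val.map (amitsurD1 k A) = β.val.map (amitsurD2 k A)) :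
    ∃ a : (Matrix ι ι k)ˣ, β.val = a.val.map (algebraMap k A) := by
  have hrange (i j) : β.val i j ∈ Set.range (algebraMap k A) := by
    rw [← (Algebra.IsEffective.of_faithfullyFlat k A).eqLocus_includeLeft_includeRight]
    exact (congrFun (congrFun hβ i) j).symm
  choose c hc using hrange
  have hβc : β.val = (Matrix.of c).map (algebraMap k A) :=
    Matrix.ext fun i j => (hc i j).symm
  have hdet : IsUnit (Matrix.of c).det := by
    refine isUnit_iff_ne_zero.mpr fun h0 => not_isUnit_zero (M₀ := A) ?_
    have := (Matrix.isUnit_iff_isUnit_det _).mp β.isUnit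
    rwa [hβc, ← RingHom.mapMatrix_apply, ← RingHom.map_det, h0, map_zero] at this
  exact ⟨((Matrix.isUnit_iff_isUnit_det _).mpr hdet).unit, hβc⟩

end Equalizer

theorem torsors_sigma_kernel_group_general (k A : Type*) [Field k] [CommRing A] [Algebra k A]
    [Nontrivial A]
    (σA : A →+* A)
    (τ : A ⊗[k] A →+* A ⊗[k] A)
    (hτ : ∀ a b : A, τ (a ⊗ₜ[k] b) = σA a ⊗ₜ[k] σA b)
    (n d : ℕ)
    (χ : (Matrix (Fin n) (Fin n) (A ⊗[k] A))ˣ)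
    (hcoc : χ.val.map (amitsurP2 k A) =
      χ.val.map (amitsurP1 k A) * χ.val.map (amitsurP3 k A))
    (hτχ : χ.val.map (τ ^ d) = (1 : Matrix (Fin n) (Fin n) (A ⊗[k] A))) :
    ∃ (α : (Matrix (Fin n) (Fin n) A)ˣ) (a : (Matrix (Fin n) (Fin n) k)ˣ),
      χ = Units.map ((amitsurD1 k A).toRingHom.mapMatrix.toMonoidHom) α *
          (Units.map ((amitsurD2 k A).toRingHom.mapMatrix.toMonoidHom) α)⁻¹ ∧
      α.val.map (σA ^ d) = a.val.map (algebraMap k A) := by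
  obtain ⟨α, hα⟩ := exists_units_map_amitsurD1_eq_mul hcoc
  obtain ⟨a, ha⟩ := exists_units_eq_map_algebraMap (k := k)
    (Units.map ((σA ^ d).mapMatrix (m := Fin n)).toMonoidHom α)
    (map_amitsurD1_eq_map_amitsurD2_of_tmul (pow_apply_tmul hτ d) hα hτχ)
  exact ⟨α, a, eq_mul_inv_of_mul_eq (Units.ext hα.symm), ha⟩

/-- Cocycle-level classification of torsors for the σ-algebraic group
`G = {g ∈ GLₙ | σᵈ(g) = 1}`: every cocycle `χ` with `τᵈ(χ) = 1` is of the form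
`δ₁(α)·δ₂(α)⁻¹` with `σᵈ(α) = a` for some `a ∈ GLₙ(k)`. -/
theorem torsors_sigma_kernel_group (k A : Type*) [Field k] [CommRing A] [Algebra k A]
    [Nontrivial A]
    (σk : k →+* k) (σA : A →+* A)
    (hσ : ∀ c : k, σA (algebraMap k A c) = algebraMap k A (σk c))
    (τ : A ⊗[k] A →+* A ⊗[k] A)
    (hτ : ∀ a b : A, τ (a ⊗ₜ[k] b) = σA a ⊗ₜ[k] σA b)
    (n d : ℕ) (hn : 1 ≤ n) (hd : 1 ≤ d)
    (χ : (Matrix (Fin n) (Fin n) (A ⊗[k] A))ˣ)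
    (hcoc : χ.val.map (amitsurP2 k A) =
      χ.val.map (amitsurP1 k A) * χ.val.map (amitsurP3 k A))
    (hτχ : χ.val.map (τ ^ d) = (1 : Matrix (Fin n) (Fin n) (A ⊗[k] A))) :
    ∃ (α : (Matrix (Fin n) (Fin n) A)ˣ) (a : (Matrix (Fin n) (Fin n) k)ˣ),
      χ = Units.map ((amitsurD1 k A).toRingHom.mapMatrix.toMonoidHom) α *
          (Units.map ((amitsurD2 k A).toRingHom.mapMatrix.toMonoidHom) α)⁻¹ ∧
      α.val.map (σA ^ d) = a.val.map (algebraMap k A) :=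
  torsors_sigma_kernel_group_general k A σA τ hτ n d χ hcoc hτχ
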